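/- (Pyramidal formula.) Let s ∈ ℕ and let w₁, …, wₙ be non-empty words in 𝒜_{k₁}, …, 𝒜_{kₙ} with k₁ ≠ k₂ ≠ … ≠ kₙ (k_i ∈ {1,2}) and n ≤ s + 1. Then Φ̃^{(s)}(j_{k₁}^{(s)}(w₁) ⋯ j_{kₙ}^{(s)}(wₙ)) = Σ Φ̃^{(s)}(j_{k₁,m₁}^{(s)}(w₁) ⋯ j_{kₙ,mₙ}^{(s)}(wₙ)), where the sum runs over all indices with 1 ≤ m_i ≤ min(i, n + 1 − i) for each i (in particular m₁ = mₙ = 1). (Claim in the proof of Theorem 4.1) -/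

import Mathlib

open scoped ComplexOrder TensorProduct

/-- `w` is a non-empty word in the generating set `G`. -/
def IsWord {R : Type*} [Monoid R] (G : Set R) (w : R) : Prop :=
  ∃ l : List R, l ≠ [] ∧ (∀ x ∈ l, x ∈ G) ∧ w = l.prod

/-- `φ` is a state on the unital complex *-algebra `R`. -/
def IsState {R : Type*} [Ring R] [Algebra ℂ R] [StarRing R] (φ : R →ₗ[ℂ] ℂ) : Prop :=
  φ 1 = 1 ∧ ∀ x, 0 ≤ φ (x * star x)

/-- The ordered product `f a * f (a+1) * ⋯ * f b` (an empty product if `b < a`). -/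
def ordProd {T : Type*} [Monoid T] (f : ℕ → T) (a b : ℕ) : T :=
  ((List.range' a (b + 1 - a)).map f).prod

/-- The element `t_{[k,m]}`: `g` at the tensor sites `k, …, m` (1-based), with the
convention `t_{[0,m]} = 0`. -/
def tBlock {T : Type*} [Ring T] (g : ℕ → T) (k m : ℕ) : T :=
  if k = 0 then 0 else ordProd g k m

/-- The embedding at tensor site `k` among the sites `1, …, m`, with value `0` out of
range (the convention `i_{m+1,m}(a) = 0`). -/
def embSite {T R : Type*} [Ring T] (e : ℕ → R → T) (m k : ℕ) (x : R) : T :=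
  if 1 ≤ k ∧ k ≤ m then e k x else 0

/-- `φt` is the Boolean extension of the state `φ` to the free product `S = R * ℂ[t]`
(with canonical embedding `ι : R → S` and separator `t`):  one has `φt 1 = 1` and
`φt (t^{e₀} w₁ t^{e₁} ⋯ wₙ t^{eₙ}) = φ(w₁) ⋯ φ(wₙ)` for all non-empty words `wᵢ` in the
generating set `G` and all exponents with `e₁, …, e_{n-1} > 0`. -/
def IsBooleanExt {R S : Type*} [Ring R] [Algebra ℂ R] [Ring S] [Algebra ℂ S]
    (G : Set R) (ι : R → S) (t : S) (φ : R →ₗ[ℂ] ℂ) (φt : S →ₗ[ℂ] ℂ) : Prop :=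
  φt 1 = 1 ∧
  ∀ (n : ℕ) (w : ℕ → R) (e : ℕ → ℕ),
    (∀ i < n, IsWord G (w i)) →
    (∀ i, 0 < i → i < n → 0 < e i) →
    φt (((List.range n).map fun i => t ^ e i * ι (w i)).prod * t ^ e n) =
      ((List.range n).map fun i => φ (w i)).prod

/-!
For `1 ≤ r ≤ s` the component `j_{k,r}(w)` is an elementary tensor: `w` at site `r` of its own
block and, in the other block, `1 - t` at site `r - 1` and `t` at the sites `≥ r`, because
`t_{[r,s]} - t_{[r-1,s]} = (1 - t)_{r-1} t_{[r,s]}`. Products of such tensors are again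
elementary, so `Φ̃` of a product of components factorises into `φ̃` or `ψ̃` applied to the
product of letters at each site.

If some index `r_i` leaves the pyramid `r_i ≤ min(i, n + 1 - i)`, the extreme such index `i₀`
(the first one with `r_i > i`, or else the last one with `r_i > n + 1 - i`) satisfies
`r_j ≤ r_{i₀} - 2` for all `j` on one side of it. At site `r_{i₀} - 1` of the other block these
components contribute only `1`s and `t`s, so the letter there is `x (1 - t) y` with `x` or `y` a
power of `t`. A Boolean extension does not see powers of `t` at either end of a word, hence
`φ̃(x y) = φ̃(x t y)`, that site factor vanishes, and only pyramidal indices contribute.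
-/

section ordProd

variable {M : Type*} [Monoid M]

theorem ordProd_congr {f g : ℕ → M} {a b : ℕ} (h : ∀ l, a ≤ l → l ≤ b → f l = g l) :
    ordProd f a b = ordProd g a b := by
  refine congrArg List.prod (List.map_congr_left fun l hl => ?_)
  rw [List.mem_range'_1] at hl
  exact h l hl.1 (by omega)

theorem ordProd_eq_mul_ordProd_succ (f : ℕ → M) {a b : ℕ} (h : a ≤ b) :
    ordProd f a b = f a * ordProd f (a + 1) b := by
  rw [ordProd, ordProd, show b + 1 - a = (b - a) + 1 by omega, List.range'_succ,
    List.map_cons, List.prod_cons, show b + 1 - (a + 1) = b - a by omega]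

theorem ordProd_eq_one_of_lt (f : ℕ → M) {a b : ℕ} (h : b < a) : ordProd f a b = 1 := by
  rw [ordProd, show b + 1 - a = 0 by omega, List.range'_zero, List.map_nil, List.prod_nil]

theorem ordProd_eq_ordProd_of_eq_one {f : ℕ → M} {a b c : ℕ} (hac : a ≤ c) (hcb : c ≤ b + 1)
    (h : ∀ l, a ≤ l → l < c → f l = 1) : ordProd f a b = ordProd f c b := by
  induction c, hac using Nat.le_induction with
  | base => rfl
  | succ c hac ih =>
    rw [ih (by omega) fun l hl hlc => h l hl (by omega), ordProd_eq_mul_ordProd_succ f (by omega),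
      h c hac (by omega), one_mul]

theorem ordProd_eq_single {f : ℕ → M} {a b r : ℕ} (har : a ≤ r) (hrb : r ≤ b)
    (h : ∀ l, l ≠ r → f l = 1) : ordProd f a b = f r := by
  rw [ordProd_eq_ordProd_of_eq_one har (by omega) fun l _ hl => h l (by omega),
    ordProd_eq_mul_ordProd_succ f hrb,
    ordProd_eq_ordProd_of_eq_one (c := b + 1) (by omega) le_rfl fun l hl _ => h l (by omega),
    ordProd_eq_one_of_lt f (by omega), mul_one]

theorem ordProd_mul_ordProd {f g : ℕ → M} (h : ∀ l l', l ≠ l' → Commute (f l) (g l'))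
    (a b : ℕ) : ordProd f a b * ordProd g a b = ordProd (f * g) a b := by
  unfold ordProd
  induction b + 1 - a generalizing a with
  | zero => simp
  | succ n ih =>
    simp only [List.range'_succ, List.map_cons, List.prod_cons, Pi.mul_apply, ← ih]
    have hcomm : Commute ((List.range' (a + 1) n).map f).prod (g a) :=
      Commute.list_prod_left _ _ fun x hx => by
        obtain ⟨l, hl, rfl⟩ := List.mem_map.1 hx
        exact h l a (by rw [List.mem_range'_1] at hl; omega)
    rw [mul_assoc, ← mul_assoc _ (g a), hcomm.eq]
    simp only [mul_assoc]

theorem ordProd_commute_ordProd {f g : ℕ → M} (h : ∀ l l', Commute (f l) (g l'))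
    (a b c d : ℕ) : Commute (ordProd f a b) (ordProd g c d) :=
  Commute.list_prod_left _ _ fun _ hx => Commute.list_prod_right _ _ fun _ hy => by
    obtain ⟨l, -, rfl⟩ := List.mem_map.1 hx
    obtain ⟨l', -, rfl⟩ := List.mem_map.1 hy
    exact h l l'

theorem ordProd_eq_zero {M₀ : Type*} [MonoidWithZero M₀] {f : ℕ → M₀} {a b l : ℕ}
    (hal : a ≤ l) (hlb : l ≤ b) (h : f l = 0) : ordProd f a b = 0 :=
  List.prod_eq_zero (List.mem_map.2 ⟨l, List.mem_range'_1.2 ⟨hal, by omega⟩, h⟩)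

end ordProd

theorem list_prod_ofFn_sum_eq_sum_piFinset {R κ : Type*} [Semiring R] {n : ℕ} (s : Fin n → Finset κ)
    (f : Fin n → κ → R) :
    (List.ofFn fun i => ∑ j ∈ s i, f i j).prod =
      ∑ g ∈ Fintype.piFinset s, (List.ofFn fun i => f i (g i)).prod := by
  induction n with
  | zero => simp
  | succ n ih =>
    classical
    rw [List.ofFn_succ, List.prod_cons, ih, Finset.sum_mul_sum,
      ← Finset.filter_true (Fintype.piFinset s),
      Finset.filter_piFinset_eq_map_consEquiv s (fun _ => True), Finset.sum_map,
      Finset.sum_product]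
    simp only [Finset.filter_true, Function.Embedding.coeFn_mk, Fin.consEquiv_apply,
      List.ofFn_succ, Fin.cons_zero, Fin.cons_succ, List.prod_cons]
    rfl

theorem IsWord.mul {M : Type*} [Monoid M] {G : Set M} {a b : M} (ha : IsWord G a)
    (hb : IsWord G b) : IsWord G (a * b) := by
  obtain ⟨l₁, hl₁, hG₁, rfl⟩ := ha
  obtain ⟨l₂, -, hG₂, rfl⟩ := hb
  refine ⟨l₁ ++ l₂, by simp [hl₁], fun x hx => ?_, List.prod_append.symm⟩
  rcases List.mem_append.1 hx with hx | hx
  exacts [hG₁ x hx, hG₂ x hx]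

section Boolean

variable {R S F : Type*} [Monoid S] [FunLike F R S]

def booleanMonomial (ι : F) (t : S) (p : ℕ) (u : ℕ → R) (c : ℕ → ℕ) : S :=
  ((List.range p).map fun i => t ^ c i * ι (u i)).prod * t ^ c p

variable (ι : F) (t : S)

theorem booleanMonomial_mul_self (p : ℕ) (u : ℕ → R) (c : ℕ → ℕ) :
    booleanMonomial ι t p u c * t = booleanMonomial ι t p u (Function.update c p (c p + 1)) := by
  rw [booleanMonomial, booleanMonomial, Function.update_self, pow_succ, mul_assoc]
  congr 2
  refine List.map_congr_left fun i hi => ?_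
  rw [Function.update_of_ne (List.mem_range.1 hi).ne]

theorem self_mul_booleanMonomial (p : ℕ) (u : ℕ → R) (c : ℕ → ℕ) :
    t * booleanMonomial ι t p u c = booleanMonomial ι t p u (Function.update c 0 (c 0 + 1)) := by
  rcases p with _ | p
  · simp [booleanMonomial, pow_succ']
  · simp only [booleanMonomial, List.range_succ_eq_map, List.map_cons, List.map_map,
      List.prod_cons, Function.update_self, Function.comp_def,
      Function.update_of_ne (Nat.succ_ne_zero _), pow_succ', mul_assoc]

theorem booleanMonomial_mul_map (p : ℕ) (u : ℕ → R) (c : ℕ → ℕ) (a : R) :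
    booleanMonomial ι t p u c * ι a =
      booleanMonomial ι t (p + 1) (Function.update u p a) (Function.update c (p + 1) 0) := by
  simp only [booleanMonomial, List.range_succ, List.map_append, List.prod_append,
    List.map_singleton, List.prod_singleton, Function.update_self,
    Function.update_of_ne (Nat.succ_ne_self p).symm, pow_zero, mul_one, mul_assoc]
  congr 2
  refine List.map_congr_left fun i hi => ?_
  have hip := List.mem_range.1 hi
  rw [Function.update_of_ne hip.ne, Function.update_of_ne (by omega : i ≠ p + 1)]

theorem booleanMonomial_mul_map_of_eq_zero [Monoid R] [MulHomClass F R S] {p : ℕ} {c : ℕ → ℕ}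
    (hc : c (p + 1) = 0) (u : ℕ → R) (a : R) :
    booleanMonomial ι t (p + 1) u c * ι a =
      booleanMonomial ι t (p + 1) (Function.update u p (u p * a)) c := by
  simp only [booleanMonomial, List.range_succ, List.map_append, List.prod_append,
    List.map_singleton, List.prod_singleton, Function.update_self, hc, pow_zero, mul_one,
    map_mul, mul_assoc]
  congr 2
  refine List.map_congr_left fun i hi => ?_
  rw [Function.update_of_ne (List.mem_range.1 hi).ne]

theorem exists_booleanMonomial_of_mem_closure [Monoid R] [MulHomClass F R S] {G : Set R}
    {ι : F} {t : S} {x : S}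
    (hx : x ∈ Submonoid.closure (insert t (ι '' {a | IsWord G a}))) :
    ∃ p u c, (∀ i < p, IsWord G (u i)) ∧ (∀ i, 0 < i → i < p → 0 < c i) ∧
      x = booleanMonomial ι t p u c := by
  induction hx using Submonoid.closure_induction_right with
  | one => exact ⟨0, fun _ => 1, fun _ => 0, by omega, by omega, by simp [booleanMonomial]⟩
  | mul_right x _ y hy ih =>
    obtain ⟨p, u, c, hu, hc, rfl⟩ := ih
    rcases hy with rfl | ⟨a, ha, rfl⟩
    · refine ⟨p, u, _, hu, fun i hi hip => ?_, booleanMonomial_mul_self ι y p u c⟩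
      rw [Function.update_of_ne hip.ne]
      exact hc i hi hip
    by_cases hnew : p = 0 ∨ 0 < c p
    · refine ⟨p + 1, _, _, fun i hi => ?_, fun i hi hip => ?_,
        booleanMonomial_mul_map ι t p u c a⟩
      · rcases eq_or_ne i p with rfl | hip
        · rwa [Function.update_self]
        · rw [Function.update_of_ne hip]
          exact hu i (by omega)
      · rw [Function.update_of_ne (by omega)]
        rcases Nat.lt_or_ge i p with hip | hip
        · exact hc i hi hip
        · obtain rfl : i = p := by omega
          omega
    · obtain ⟨hp, hcp⟩ : p ≠ 0 ∧ c p = 0 := by omega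
      obtain ⟨q, rfl⟩ := Nat.exists_eq_succ_of_ne_zero hp
      refine ⟨q + 1, _, c, fun i hi => ?_, hc, booleanMonomial_mul_map_of_eq_zero ι t hcp u a⟩
      rcases eq_or_ne i q with rfl | hiq
      · rw [Function.update_self]
        exact (hu i (by omega)).mul ha
      · rw [Function.update_of_ne hiq]
        exact hu i hi

end Boolean

section LetterAlgebra

variable {R S F : Type*} [Monoid R] [Ring S] [Algebra ℂ S] [FunLike F R S]

def letterAlgebra (G : Set R) (ι : F) (t : S) : Subalgebra ℂ S :=
  Algebra.adjoin ℂ (insert t (ι '' {a | IsWord G a}))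

theorem LinearMap.eq_of_mem_letterAlgebra [MulHomClass F R S] {G : Set R} {ι : F} {t : S}
    {f g : S →ₗ[ℂ] ℂ}
    (h : ∀ p u c, (∀ i < p, IsWord G (u i)) → (∀ i, 0 < i → i < p → 0 < c i) →
      f (booleanMonomial ι t p u c) = g (booleanMonomial ι t p u c))
    {x : S} (hx : x ∈ letterAlgebra G ι t) : f x = g x := by
  rw [letterAlgebra, ← Subalgebra.mem_toSubmodule, Algebra.adjoin_eq_span] at hx
  refine LinearMap.eqOn_span (fun y hy => ?_) hx
  obtain ⟨p, u, c, hu, hc, rfl⟩ := exists_booleanMonomial_of_mem_closure hy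
  exact h p u c hu hc

end LetterAlgebra

namespace IsBooleanExt

variable {R S F : Type*} [Ring R] [Algebra ℂ R] [Ring S] [Algebra ℂ S] [FunLike F R S]
  {G : Set R} {ι : F} {t : S} {φ : R →ₗ[ℂ] ℂ} {φt : S →ₗ[ℂ] ℂ}

theorem map_booleanMonomial (hBE : IsBooleanExt G ι t φ φt) {p : ℕ} {u : ℕ → R} {c : ℕ → ℕ}
    (hu : ∀ i < p, IsWord G (u i)) (hc : ∀ i, 0 < i → i < p → 0 < c i) :
    φt (booleanMonomial ι t p u c) = ((List.range p).map fun i => φ (u i)).prod :=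
  hBE.2 p u c hu hc

theorem map_self_mul [MulHomClass F R S] (hBE : IsBooleanExt G ι t φ φt) {x : S}
    (hx : x ∈ letterAlgebra G ι t) : φt (t * x) = φt x := by
  refine LinearMap.eq_of_mem_letterAlgebra (f := φt ∘ₗ LinearMap.mulLeft ℂ t)
    (fun p u c hu hc => ?_) hx
  rw [LinearMap.comp_apply, LinearMap.mulLeft_apply, self_mul_booleanMonomial,
    hBE.map_booleanMonomial hu, hBE.map_booleanMonomial hu hc]
  intro i hi hip
  rw [Function.update_of_ne hi.ne']
  exact hc i hi hip

theorem map_mul_self [MulHomClass F R S] (hBE : IsBooleanExt G ι t φ φt) {x : S}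
    (hx : x ∈ letterAlgebra G ι t) : φt (x * t) = φt x := by
  refine LinearMap.eq_of_mem_letterAlgebra (f := φt ∘ₗ LinearMap.mulRight ℂ t)
    (fun p u c hu hc => ?_) hx
  rw [LinearMap.comp_apply, LinearMap.mulRight_apply, booleanMonomial_mul_self,
    hBE.map_booleanMonomial hu, hBE.map_booleanMonomial hu hc]
  intro i hi hip
  rw [Function.update_of_ne hip.ne]
  exact hc i hi hip

theorem map_mul_one_sub_mul [MulHomClass F R S] (hBE : IsBooleanExt G ι t φ φt) {x y : S}
    (hx : x ∈ letterAlgebra G ι t) (hy : y ∈ letterAlgebra G ι t)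
    (h : Commute t x ∨ Commute t y) : φt (x * (1 - t) * y) = 0 := by
  have hxy := mul_mem hx hy
  rcases h with h | h
  · rw [mul_sub, mul_one, sub_mul, ← h.eq, mul_assoc, map_sub, hBE.map_self_mul hxy, sub_self]
  · rw [mul_sub, mul_one, sub_mul, mul_assoc x t, h.eq, ← mul_assoc, map_sub,
      hBE.map_mul_self hxy, sub_self]

theorem map_list_prod_ofFn_eq_zero [MulHomClass F R S] (hBE : IsBooleanExt G ι t φ φt)
    {n : ℕ} {z : Fin n → S} (hz : ∀ i, z i ∈ letterAlgebra G ι t) {i₀ : Fin n} (h₀ : z i₀ = 1 - t)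
    (hside : (∀ j < i₀, z j = 1 ∨ z j = t) ∨ (∀ j, i₀ < j → z j = 1 ∨ z j = t)) :
    φt (List.ofFn z).prod = 0 := by
  have hlen : (i₀ : ℕ) < (List.ofFn z).length := by simp
  have hmem : ∀ x ∈ List.ofFn z, x ∈ letterAlgebra G ι t := by
    intro x hx
    obtain ⟨i, rfl⟩ := List.mem_ofFn.1 hx
    exact hz i
  have hcomm {j : Fin n} (hj : z j = 1 ∨ z j = t) : Commute t (z j) := by
    rcases hj with hj | hj <;> simp only [hj, Commute.one_right, Commute.refl]
  rw [← List.take_append_drop i₀ (List.ofFn z), List.drop_eq_getElem_cons hlen,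
    List.getElem_ofFn, List.prod_append, List.prod_cons, Fin.eta, h₀, ← mul_assoc]
  refine hBE.map_mul_one_sub_mul
    (Subalgebra.list_prod_mem _ fun x hx => hmem x (List.mem_of_mem_take hx))
    (Subalgebra.list_prod_mem _ fun x hx => hmem x (List.mem_of_mem_drop hx)) ?_
  rcases hside with hside | hside
  · refine Or.inl (Commute.list_prod_right _ _ fun x hx => ?_)
    obtain ⟨j, hj, rfl⟩ := List.mem_take_iff_getElem.1 hx
    rw [List.getElem_ofFn]
    exact hcomm (hside _ (Fin.mk_lt_mk.2 (by omega)))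
  · refine Or.inr (Commute.list_prod_right _ _ fun x hx => ?_)
    obtain ⟨j, hj, rfl⟩ := List.mem_drop_iff_getElem.1 hx
    rw [List.getElem_ofFn]
    exact hcomm (hside _ (Fin.mk_lt_mk.2 (by omega)))

end IsBooleanExt

section SiteLetters

variable {R S F : Type*} [Monoid R] [Ring S] [FunLike F R S] {G : Set R} {ι : F} {t : S}
  {r : ℕ} {z : ℕ → S}

/-- The letters of `t_{[r,m]} - t_{[r-1,m]} = (1 - t)_{r-1} ⊗ t_r ⊗ ⋯ ⊗ t_m`, site by site. -/
def tDiffLetter (t : S) (r l : ℕ) : S :=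
  if r ≤ l then t else if l + 1 = r then 1 - t else 1

/-- The letters at the sites of one block of a component `j_{k,r}(w)`. -/
def IsSiteLetters (G : Set R) (ι : F) (t : S) (r : ℕ) (z : ℕ → S) : Prop :=
  (∃ a, IsWord G a ∧ z = Pi.mulSingle r (ι a)) ∨ z = tDiffLetter t r

theorem IsSiteLetters.mem_letterAlgebra [Algebra ℂ S] (h : IsSiteLetters G ι t r z) (l : ℕ) :
    z l ∈ letterAlgebra G ι t := by
  have ht : t ∈ letterAlgebra G ι t := Algebra.subset_adjoin (Set.mem_insert t _)
  rcases h with ⟨a, ha, rfl⟩ | rfl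
  · rcases eq_or_ne l r with rfl | hl
    · rw [Pi.mulSingle_eq_same]
      exact Algebra.subset_adjoin (Set.mem_insert_of_mem t ⟨a, ha, rfl⟩)
    · rw [Pi.mulSingle_eq_of_ne hl]
      exact one_mem _
  · unfold tDiffLetter
    split_ifs
    exacts [ht, sub_mem (one_mem _) ht, one_mem _]

theorem IsSiteLetters.eq_one_or_eq_of_lt (h : IsSiteLetters G ι t r z) {l : ℕ} (hl : r < l) :
    z l = 1 ∨ z l = t := by
  rcases h with ⟨a, -, rfl⟩ | rfl
  · exact Or.inl (Pi.mulSingle_eq_of_ne hl.ne' _)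
  · exact Or.inr (if_pos hl.le)

end SiteLetters

theorem IsBooleanExt.map_list_prod_ofFn_site_eq_zero {R S F : Type*} [Ring R] [Algebra ℂ R]
    [Ring S] [Algebra ℂ S] [FunLike F R S] [MulHomClass F R S] {G : Set R} {ι : F} {t : S}
    {φ : R →ₗ[ℂ] ℂ} {φt : S →ₗ[ℂ] ℂ} (hBE : IsBooleanExt G ι t φ φt)
    {n : ℕ} {r : Fin n → ℕ} {z : Fin n → ℕ → S} (hz : ∀ i, IsSiteLetters G ι t (r i) (z i))
    {i₀ : Fin n} (h₀ : z i₀ = tDiffLetter t (r i₀)) (hr₀ : 1 ≤ r i₀)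
    (hside : (∀ j < i₀, r j + 2 ≤ r i₀) ∨ (∀ j, i₀ < j → r j + 2 ≤ r i₀)) :
    φt (List.ofFn fun i => z i (r i₀ - 1)).prod = 0 := by
  refine hBE.map_list_prod_ofFn_eq_zero (i₀ := i₀) (fun i => (hz i).mem_letterAlgebra _) ?_ ?_
  · rw [h₀, tDiffLetter, if_neg (by omega), if_pos (by omega)]
  · refine hside.imp (fun h j hj => ?_) (fun h j hj => ?_) <;>
    · have := h j hj
      exact (hz j).eq_one_or_eq_of_lt (by omega)

section SiteEmbedding

variable {B T F : Type*} [Ring B] [Ring T] [FunLike F B T]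

theorem ordProd_map_mulSingle [MonoidHomClass F B T] (f : ℕ → F) {r m : ℕ} (hr : 1 ≤ r)
    (hrm : r ≤ m) (b : B) :
    ordProd (fun l => f l ((Pi.mulSingle r b : ℕ → B) l)) 1 m = f r b := by
  rw [ordProd_eq_single hr hrm fun l hl => by rw [Pi.mulSingle_eq_of_ne hl, map_one],
    Pi.mulSingle_eq_same]

theorem tBlock_sub_tBlock [RingHomClass F B T] (f : ℕ → F) (t : B) {r m : ℕ} (hr : 1 ≤ r)
    (hrm : r ≤ m) :
    tBlock (fun l => f l t) r m - tBlock (fun l => f l t) (r - 1) m =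
      ordProd (fun l => f l (tDiffLetter t r l)) 1 m := by
  have htail : ordProd (fun l => f l (tDiffLetter t r l)) r m = ordProd (fun l => f l t) r m :=
    ordProd_congr fun l hl _ => by rw [tDiffLetter, if_pos hl]
  rcases eq_or_lt_of_le hr with rfl | hr2
  · rw [htail, tBlock, tBlock, if_neg one_ne_zero, if_pos (Nat.sub_self 1), sub_zero]
  have hdiff : ordProd (fun l => f l (tDiffLetter t r l)) 1 m =
      (1 - f (r - 1) t) * ordProd (fun l => f l t) r m := by
    rw [ordProd_eq_ordProd_of_eq_one (c := r - 1) (by omega) (by omega)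
        fun l _ hl => by rw [tDiffLetter, if_neg (by omega), if_neg (by omega), map_one],
      ordProd_eq_mul_ordProd_succ _ (by omega), Nat.sub_add_cancel hr, htail, tDiffLetter,
      if_neg (by omega), if_pos (by omega), map_sub, map_one]
  rw [hdiff, tBlock, tBlock, if_neg (by omega), if_neg (by omega),
    ordProd_eq_mul_ordProd_succ (fun l => f l t) (show r - 1 ≤ m by omega), Nat.sub_add_cancel hr,
    sub_mul, one_mul]

end SiteEmbedding

section SiteTensor

variable {B₀ B₁ T F₀ F₁ : Type*} [Monoid B₀] [Monoid B₁] [Monoid T] [FunLike F₀ B₀ T]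
  [MonoidHomClass F₀ B₀ T] [FunLike F₁ B₁ T] [MonoidHomClass F₁ B₁ T]

/-- The elementary tensor `x₁ ⊗ ⋯ ⊗ x_m ⊗ y₁ ⊗ ⋯ ⊗ y_m`. -/
def siteTensor (e₀ : ℕ → F₀) (e₁ : ℕ → F₁) (m : ℕ) (x : ℕ → B₀) (y : ℕ → B₁) : T :=
  ordProd (fun l => e₀ l (x l)) 1 m * ordProd (fun l => e₁ l (y l)) 1 m

def SitesCommute (e₀ : ℕ → F₀) (e₁ : ℕ → F₁) : Prop :=
  (∀ l l', l ≠ l' → ∀ a b, Commute (e₀ l a) (e₀ l' b)) ∧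
    (∀ l l', l ≠ l' → ∀ a b, Commute (e₁ l a) (e₁ l' b)) ∧
    ∀ l l' a b, Commute (e₁ l a) (e₀ l' b)

variable {e₀ : ℕ → F₀} {e₁ : ℕ → F₁}

theorem SitesCommute.siteTensor_mul (h : SitesCommute e₀ e₁) (m : ℕ) (x x' : ℕ → B₀)
    (y y' : ℕ → B₁) :
    siteTensor e₀ e₁ m x y * siteTensor e₀ e₁ m x' y' = siteTensor e₀ e₁ m (x * x') (y * y') := by
  obtain ⟨h₀, h₁, h₀₁⟩ := h
  have hc := ordProd_commute_ordProd (fun l l' => h₀₁ l l' (y l) (x' l')) 1 m 1 m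
  rw [siteTensor, siteTensor, siteTensor, mul_assoc, ← mul_assoc _ _ (ordProd _ 1 m), hc.eq,
    mul_assoc, ← mul_assoc, ordProd_mul_ordProd fun l l' hl => h₀ l l' hl _ _,
    ordProd_mul_ordProd fun l l' hl => h₁ l l' hl _ _]
  simp only [Pi.mul_def, map_mul]

theorem SitesCommute.list_prod_map_siteTensor (h : SitesCommute e₀ e₁) (m : ℕ) {α : Type*}
    (L : List α) (x : α → ℕ → B₀) (y : α → ℕ → B₁) :
    (L.map fun j => siteTensor e₀ e₁ m (x j) (y j)).prod =
      siteTensor e₀ e₁ m (L.map x).prod (L.map y).prod := by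
  induction L with
  | nil => simp [siteTensor, ordProd]
  | cons j L ih => rw [List.map_cons, List.prod_cons, ih, h.siteTensor_mul, List.map_cons,
      List.prod_cons, List.map_cons, List.prod_cons]

end SiteTensor

theorem exists_isolated_of_min_lt {n : ℕ} {r : Fin n → ℕ}
    (h : ∃ i : Fin n, min ((i : ℕ) + 1) (n - i) < r i) :
    ∃ i₀, 2 ≤ r i₀ ∧ ((∀ j < i₀, r j + 2 ≤ r i₀) ∨ (∀ j, i₀ < j → r j + 2 ≤ r i₀)) := by
  by_cases hleft : ∃ i : Fin n, (i : ℕ) + 1 < r i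
  · obtain ⟨i₀, hi₀, hmin⟩ := wellFounded_lt.has_min {i : Fin n | (i : ℕ) + 1 < r i} hleft
    refine ⟨i₀, by simp only [Set.mem_ofPred_eq] at hi₀; omega, Or.inl fun j hj => ?_⟩
    have hj' : ¬ (j : ℕ) + 1 < r j := fun hj' => hmin j hj' hj
    rw [Fin.lt_def] at hj
    simp only [Set.mem_ofPred_eq] at hi₀
    omega
  · push Not at hleft
    obtain ⟨i₀, hi₀, hmax⟩ := wellFounded_gt.has_min {i : Fin n | n - i < r i}
      (h.imp fun i hi => by have := hleft i; simp only [Set.mem_ofPred_eq]; omega)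
    simp only [Set.mem_ofPred_eq] at hi₀
    refine ⟨i₀, by omega, Or.inr fun j hj => ?_⟩
    have hj' : ¬ n - j < r j := fun hj' => hmax j hj' hj
    rw [Fin.lt_def] at hj
    omega

theorem sum_pi_fin_eq_sum_piFinset_Icc {M : Type*} [AddCommMonoid M] {n : ℕ} (c : Fin n → ℕ)
    (g : (Fin n → ℕ) → M) :
    ∑ r : (∀ i, Fin (c i)), g (fun i => (r i : ℕ) + 1) =
      ∑ ρ ∈ Fintype.piFinset fun i => Finset.Icc 1 (c i), g ρ := by
  refine Finset.sum_bij (fun r _ i => (r i : ℕ) + 1) (fun r _ => ?_) (fun r _ r' _ h => ?_)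
    (fun ρ hρ => ?_) fun _ _ => rfl
  · simp only [Fintype.mem_piFinset, Finset.mem_Icc]
    exact fun i => ⟨by omega, (r i).isLt⟩
  · funext i
    exact Fin.ext (by simpa using congrFun h i)
  · simp only [Fintype.mem_piFinset, Finset.mem_Icc] at hρ
    refine ⟨fun i => ⟨ρ i - 1, by have := hρ i; omega⟩, Finset.mem_univ _, funext fun i => ?_⟩
    show ρ i - 1 + 1 = ρ i
    have := hρ i
    omega

section Pyramid

variable {A B : Fin 2 → Type*} {T : Type*} [∀ i, Ring (A i)] [∀ i, Algebra ℂ (A i)]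
  [∀ i, StarRing (A i)] [∀ i, Ring (B i)] [∀ i, Algebra ℂ (B i)] [∀ i, StarRing (B i)] [Ring T]
  [Algebra ℂ T] [StarRing T] {G : ∀ i, Set (A i)} {ι : ∀ i, A i →⋆ₐ[ℂ] B i} {t : ∀ i, B i}
  {m : ℕ} {e : ∀ i, ℕ → B i →⋆ₐ[ℂ] T} {jc : ∀ i, ℕ → A i → T}

theorem exists_siteTensor_eq_jc
    (hjc1 : ∀ (r : ℕ) (x : A 0), jc 0 r x =
      embSite (fun l y => e 0 l y) m r (ι 0 x) *
        (tBlock (fun l => e 1 l (t 1)) r m - tBlock (fun l => e 1 l (t 1)) (r - 1) m))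
    (hjc2 : ∀ (r : ℕ) (x : A 1), jc 1 r x =
      (tBlock (fun l => e 0 l (t 0)) r m - tBlock (fun l => e 0 l (t 0)) (r - 1) m) *
        embSite (fun l y => e 1 l y) m r (ι 1 x))
    (κ : Fin 2) {r : ℕ} (hr : 1 ≤ r) (hrm : r ≤ m) {v : A κ} (hv : IsWord (G κ) v) :
    ∃ x y, jc κ r v = siteTensor (e 0) (e 1) m x y ∧ IsSiteLetters (G 0) (ι 0) (t 0) r x ∧
      IsSiteLetters (G 1) (ι 1) (t 1) r y ∧ (x = tDiffLetter (t 0) r ∨ y = tDiffLetter (t 1) r) :=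
  match κ, v, hv with
  | 0, v, hv => ⟨Pi.mulSingle r (ι 0 v), tDiffLetter (t 1) r,
      by rw [hjc1, embSite, if_pos ⟨hr, hrm⟩, tBlock_sub_tBlock (e 1) (t 1) hr hrm, siteTensor,
        ordProd_map_mulSingle (e 0) hr hrm],
      Or.inl ⟨v, hv, rfl⟩, Or.inr rfl, Or.inr rfl⟩
  | 1, v, hv => ⟨tDiffLetter (t 0) r, Pi.mulSingle r (ι 1 v),
      by rw [hjc2, embSite, if_pos ⟨hr, hrm⟩, tBlock_sub_tBlock (e 0) (t 0) hr hrm, siteTensor,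
        ordProd_map_mulSingle (e 1) hr hrm],
      Or.inr rfl, Or.inl ⟨v, hv, rfl⟩, Or.inl rfl⟩

theorem map_list_prod_ofFn_jc_eq_zero {φ ψ : ∀ i, A i →ₗ[ℂ] ℂ} {φt ψt : ∀ i, B i →ₗ[ℂ] ℂ}
    {Φ : T →ₗ[ℂ] ℂ} (hsites : SitesCommute (e 0) (e 1))
    (hφt : ∀ i, IsBooleanExt (G i) (⇑(ι i)) (t i) (φ i) (φt i))
    (hψt : ∀ i, IsBooleanExt (G i) (⇑(ι i)) (t i) (ψ i) (ψt i))
    (hΦ : ∀ (x : ℕ → B 0) (y : ℕ → B 1),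
      Φ (ordProd (fun k => e 0 k (x k)) 1 m * ordProd (fun k => e 1 k (y k)) 1 m) =
        ordProd (fun k => if k = 1 then φt 0 (x k) else ψt 0 (x k)) 1 m *
          ordProd (fun k => if k = 1 then φt 1 (y k) else ψt 1 (y k)) 1 m)
    (hjc1 : ∀ (r : ℕ) (x : A 0), jc 0 r x =
      embSite (fun l y => e 0 l y) m r (ι 0 x) *
        (tBlock (fun l => e 1 l (t 1)) r m - tBlock (fun l => e 1 l (t 1)) (r - 1) m))
    (hjc2 : ∀ (r : ℕ) (x : A 1), jc 1 r x =
      (tBlock (fun l => e 0 l (t 0)) r m - tBlock (fun l => e 0 l (t 0)) (r - 1) m) *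
        embSite (fun l y => e 1 l y) m r (ι 1 x))
    {n : ℕ} {k : Fin n → Fin 2} {w : ∀ i, A (k i)} (hw : ∀ i, IsWord (G (k i)) (w i))
    {r : Fin n → ℕ} (hr : ∀ i, 1 ≤ r i ∧ r i ≤ m)
    (hout : ∃ i : Fin n, min ((i : ℕ) + 1) (n - i) < r i) :
    Φ (List.ofFn fun i => jc (k i) (r i) (w i)).prod = 0 := by
  obtain ⟨i₀, h2, hside⟩ := exists_isolated_of_min_lt hout
  choose x y hjc hx hy hdiff using
    fun i => exists_siteTensor_eq_jc hjc1 hjc2 (k i) (hr i).1 (hr i).2 (hw i)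
  have hl₀ : 1 ≤ r i₀ - 1 := by omega
  have hl₀m : r i₀ - 1 ≤ m := by have := (hr i₀).2; omega
  simp only [hjc]
  rw [List.ofFn_eq_map, hsites.list_prod_map_siteTensor, siteTensor, hΦ, ← List.ofFn_eq_map,
    ← List.ofFn_eq_map]
  rcases hdiff i₀ with h₀ | h₀
  · refine mul_eq_zero_of_left (ordProd_eq_zero hl₀ hl₀m ?_) _
    rw [Pi.list_prod_apply, List.map_ofFn]
    split_ifs
    exacts [(hφt 0).map_list_prod_ofFn_site_eq_zero hx h₀ (by omega) hside,
      (hψt 0).map_list_prod_ofFn_site_eq_zero hx h₀ (by omega) hside]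
  · refine mul_eq_zero_of_right _ (ordProd_eq_zero hl₀ hl₀m ?_)
    rw [Pi.list_prod_apply, List.map_ofFn]
    split_ifs
    exacts [(hφt 1).map_list_prod_ofFn_site_eq_zero hy h₀ (by omega) hside,
      (hψt 1).map_list_prod_ofFn_site_eq_zero hy h₀ (by omega) hside]

end Pyramid

/- For `i : Fin 2`, `A i` plays the role of `𝒜ᵢ₊₁` with generating set `G i`, `B i` that of
`𝒜̃ᵢ₊₁ = 𝒜ᵢ₊₁ * ℂ[t]` with embedding `ι i` and separator `t i`, and `T` that of
`𝒜̃^{(m)} = 𝒜̃₁^{⊗m} ⊗ 𝒜̃₂^{⊗m}`, with `e i k : B i → T` the embedding at site `k` of block `i`. -/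
theorem pyramidal_formula_general
    {A B : Fin 2 → Type*} {T : Type*}
    [∀ i, Ring (A i)] [∀ i, Algebra ℂ (A i)] [∀ i, StarRing (A i)]
    [∀ i, Ring (B i)] [∀ i, Algebra ℂ (B i)] [∀ i, StarRing (B i)]
    [Ring T] [Algebra ℂ T] [StarRing T]
    (G : ∀ i, Set (A i))
    (ι : ∀ i, A i →⋆ₐ[ℂ] B i) (t : ∀ i, B i)
    (m : ℕ) (hm : 1 ≤ m)
    (e : ∀ i, ℕ → B i →⋆ₐ[ℂ] T)
    (hcomm : ∀ (i i' : Fin 2) (k k' : ℕ), (i, k) ≠ (i', k') →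
      ∀ (x : B i) (y : B i'), Commute (e i k x) (e i' k' y))
    -- the pairs of states `(φᵢ, ψᵢ)` on `A i` and their Boolean extensions `φt i`, `ψt i`
    (φ ψ : ∀ i, A i →ₗ[ℂ] ℂ)
    (φt ψt : ∀ i, B i →ₗ[ℂ] ℂ)
    (hφt : ∀ i, IsBooleanExt (G i) (⇑(ι i)) (t i) (φ i) (φt i))
    (hψt : ∀ i, IsBooleanExt (G i) (⇑(ι i)) (t i) (ψ i) (ψt i))
    -- the tensor product state `Φ̃^{(m)} = φ̃₁ ⊗ ψ̃₁^{⊗(m-1)} ⊗ φ̃₂ ⊗ ψ̃₂^{⊗(m-1)}`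
    (Φ : T →ₗ[ℂ] ℂ)
    (hΦ : ∀ (x : ℕ → B 0) (y : ℕ → B 1),
      Φ (ordProd (fun k => e 0 k (x k)) 1 m * ordProd (fun k => e 1 k (y k)) 1 m) =
        ordProd (fun k => if k = 1 then φt 0 (x k) else ψt 0 (x k)) 1 m *
          ordProd (fun k => if k = 1 then φt 1 (y k) else ψt 1 (y k)) 1 m)
    -- the components `j_{1,r}^{(s)}(w) = i_{r,s}(w) ⊗ (t_{[r,s]} - t_{[r-1,s]})` and
    -- `j_{2,r}^{(s)}(v) = (t_{[r,s]} - t_{[r-1,s]}) ⊗ i_{r,s}(v)`  (here `m` plays the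
    -- role of `s`, and `j_k^{(s)} = Σ_{r=1}^s j_{k,r}^{(s)}`)
    (jc : ∀ i, ℕ → A i → T)
    (hjc1 : ∀ (r : ℕ) (x : A 0), jc 0 r x =
      embSite (fun l y => e 0 l y) m r (ι 0 x) *
        (tBlock (fun l => e 1 l (t 1)) r m - tBlock (fun l => e 1 l (t 1)) (r - 1) m))
    (hjc2 : ∀ (r : ℕ) (x : A 1), jc 1 r x =
      (tBlock (fun l => e 0 l (t 0)) r m - tBlock (fun l => e 0 l (t 0)) (r - 1) m) *
        embSite (fun l y => e 1 l y) m r (ι 1 x))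
    -- `n ≤ s + 1` non-empty words `w i` in `𝒜_{k i}`, with consecutive indices distinct
    (n : ℕ) (hn : n ≤ m + 1) (k : ℕ → Fin 2) (w : ∀ i, A (k i))
    (hw : ∀ i < n, IsWord (G (k i)) (w i)) :
    -- `Φ̃^{(s)}(j_{k₁}^{(s)}(w₁) ⋯ j_{kₙ}^{(s)}(wₙ))
    --   = Σ_{1 ≤ mᵢ ≤ min(i, n+1-i)} Φ̃^{(s)}(j_{k₁,m₁}^{(s)}(w₁) ⋯ j_{kₙ,mₙ}^{(s)}(wₙ))`
    Φ (((List.range n).map fun i => ∑ r ∈ Finset.Icc 1 m, jc (k i) r (w i)).prod) =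
      ∑ r : (∀ i : Fin n, Fin (min (i.1 + 1) (n - i.1))),
        Φ ((List.ofFn fun i : Fin n => jc (k i.1) ((r i : ℕ) + 1) (w i.1)).prod) := by
  have hsites : SitesCommute (e 0) (e 1) :=
    ⟨fun l l' h => hcomm 0 0 l l' (by simp [h]), fun l l' h => hcomm 1 1 l l' (by simp [h]),
      fun l l' => hcomm 1 0 l l' (by simp)⟩
  have hsub : (Fintype.piFinset fun i : Fin n => Finset.Icc 1 (min ((i : ℕ) + 1) (n - i))) ⊆
      Fintype.piFinset fun _ => Finset.Icc 1 m :=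
    Fintype.piFinset_subset _ _ fun i => Finset.Icc_subset_Icc_right (by omega)
  rw [← List.map_coe_finRange_eq_range, List.map_map, ← List.ofFn_eq_map, Function.comp_def,
    list_prod_ofFn_sum_eq_sum_piFinset, map_sum,
    sum_pi_fin_eq_sum_piFinset_Icc (fun i : Fin n => min ((i : ℕ) + 1) (n - i))
      fun r => Φ (List.ofFn fun i : Fin n => jc (k i) (r i) (w i)).prod]
  refine (Finset.sum_subset hsub fun r hr hout => ?_).symm
  simp only [Fintype.mem_piFinset, Finset.mem_Icc, not_forall] at hr hout
  obtain ⟨i, hi⟩ := hout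
  exact map_list_prod_ofFn_jc_eq_zero (k := fun i => k i) (w := fun i => w i) hsites hφt hψt hΦ
    hjc1 hjc2 (fun i => hw i i.isLt) hr ⟨i, by have := hr i; omega⟩

theorem pyramidal_formula
    {A B : Fin 2 → Type*} {T : Type*}
    [∀ i, Ring (A i)] [∀ i, Algebra ℂ (A i)] [∀ i, StarRing (A i)] [∀ i, StarModule ℂ (A i)]
    [∀ i, Ring (B i)] [∀ i, Algebra ℂ (B i)] [∀ i, StarRing (B i)] [∀ i, StarModule ℂ (B i)]
    [Ring T] [Algebra ℂ T] [StarRing T] [StarModule ℂ T]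
    (G : ∀ i, Set (A i)) (hG : ∀ i, ∀ x ∈ G i, star x ∈ G i)
    (hA : ∀ i, Algebra.adjoin ℂ (G i) = ⊤)
    (ι : ∀ i, A i →⋆ₐ[ℂ] B i) (t : ∀ i, B i) (ht : ∀ i, star (t i) = t i)
    (hB : ∀ i, Algebra.adjoin ℂ (Set.range (ι i) ∪ {t i}) = ⊤)
    (m : ℕ) (hm : 1 ≤ m)
    (e : ∀ i, ℕ → B i →⋆ₐ[ℂ] T)
    (hcomm : ∀ (i i' : Fin 2) (k k' : ℕ), (i, k) ≠ (i', k') →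
      ∀ (x : B i) (y : B i'), Commute (e i k x) (e i' k' y))
    (hT : Algebra.adjoin ℂ
      {x : T | ∃ (i : Fin 2) (k : ℕ), 1 ≤ k ∧ k ≤ m ∧ ∃ b : B i, x = e i k b} = ⊤)
    -- the pairs of states `(φᵢ, ψᵢ)` on `A i` and their Boolean extensions `φt i`, `ψt i`
    (φ ψ : ∀ i, A i →ₗ[ℂ] ℂ) (hφ : ∀ i, IsState (φ i)) (hψ : ∀ i, IsState (ψ i))
    (φt ψt : ∀ i, B i →ₗ[ℂ] ℂ)
    (hφt : ∀ i, IsBooleanExt (G i) (⇑(ι i)) (t i) (φ i) (φt i))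
    (hψt : ∀ i, IsBooleanExt (G i) (⇑(ι i)) (t i) (ψ i) (ψt i))
    -- the tensor product state `Φ̃^{(m)} = φ̃₁ ⊗ ψ̃₁^{⊗(m-1)} ⊗ φ̃₂ ⊗ ψ̃₂^{⊗(m-1)}`
    (Φ : T →ₗ[ℂ] ℂ)
    (hΦ : ∀ (x : ℕ → B 0) (y : ℕ → B 1),
      Φ (ordProd (fun k => e 0 k (x k)) 1 m * ordProd (fun k => e 1 k (y k)) 1 m) =
        ordProd (fun k => if k = 1 then φt 0 (x k) else ψt 0 (x k)) 1 m *
          ordProd (fun k => if k = 1 then φt 1 (y k) else ψt 1 (y k)) 1 m)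
    -- the components `j_{1,r}^{(s)}(w) = i_{r,s}(w) ⊗ (t_{[r,s]} - t_{[r-1,s]})` and
    -- `j_{2,r}^{(s)}(v) = (t_{[r,s]} - t_{[r-1,s]}) ⊗ i_{r,s}(v)`  (here `m` plays the
    -- role of `s`, and `j_k^{(s)} = Σ_{r=1}^s j_{k,r}^{(s)}`)
    (jc : ∀ i, ℕ → A i → T)
    (hjc1 : ∀ (r : ℕ) (x : A 0), jc 0 r x =
      embSite (fun l y => e 0 l y) m r (ι 0 x) *
        (tBlock (fun l => e 1 l (t 1)) r m - tBlock (fun l => e 1 l (t 1)) (r - 1) m))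
    (hjc2 : ∀ (r : ℕ) (x : A 1), jc 1 r x =
      (tBlock (fun l => e 0 l (t 0)) r m - tBlock (fun l => e 0 l (t 0)) (r - 1) m) *
        embSite (fun l y => e 1 l y) m r (ι 1 x))
    -- `n ≤ s + 1` non-empty words `w i` in `𝒜_{k i}`, with consecutive indices distinct
    (n : ℕ) (hn : n ≤ m + 1) (k : ℕ → Fin 2) (w : ∀ i, A (k i))
    (hk : ∀ i, i + 1 < n → k i ≠ k (i + 1))
    (hw : ∀ i < n, IsWord (G (k i)) (w i)) :
    -- `Φ̃^{(s)}(j_{k₁}^{(s)}(w₁) ⋯ j_{kₙ}^{(s)}(wₙ))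
    --   = Σ_{1 ≤ mᵢ ≤ min(i, n+1-i)} Φ̃^{(s)}(j_{k₁,m₁}^{(s)}(w₁) ⋯ j_{kₙ,mₙ}^{(s)}(wₙ))`
    Φ (((List.range n).map fun i => ∑ r ∈ Finset.Icc 1 m, jc (k i) r (w i)).prod) =
      ∑ r : (∀ i : Fin n, Fin (min (i.1 + 1) (n - i.1))),
        Φ ((List.ofFn fun i : Fin n => jc (k i.1) ((r i : ℕ) + 1) (w i.1)).prod) :=
  pyramidal_formula_general G ι t m hm e hcomm φ ψ φt ψt hφt hψt Φ hΦ jc hjc1 hjc2 n hn k w hw
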